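/- arXiv:2506.09437 — 3 statements merged into one kernel-verified Lean document; each statement's English description precedes it below -/
import Mathlib

section
/- Let f be a probability density on [0,1) and let I be a nested binary partition of [0,1). Define c_∅ = inf_{[0,1)} f and, for each binary string x_{1:n}, c_{x_{1:n}} = inf_{I_{x_{1:n}}} f − inf_{I_{x_{1:n-1}}} f. Then for every x ∈ [0,1) with digit sequence (x_1, x_2, ...), the telescoping identity Σ_{n=0}^∞ c_{x_{1:n}} = lim_{n→∞} inf_{I_{x_{1:n}}} f holds, and if f is lower semicontinuous at x then this limit equals f(x); consequently Σ_{n=0}^∞ c_{x_{1:n}} = f(x) for every point x of lower semicontinuity, and in that case the function (x,n) ↦ c_{x_{1:n}} defines a probability density with respect to the product of Lebesgue measure on [0,1) and counting measure on ℕ₀. -/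
/-!
Along the digits of `x`, the partial sums of `c_{x_{1:n}}` telescope to `inf_{I_{x_{1:n}}} f`, a
nondecreasing sequence bounded by `f x` because the cells are nested and all contain `x`; so the
series converges to its supremum. The cells shrink to `x`, so lower semicontinuity at `x` forces
that supremum up to `f x`. Integrating, the series equals `f` almost everywhere on `[0,1)`, whose
integral is `1`.
-/

open Filter Set MeasureTheory

def pre (y : ℕ → Bool) (n : ℕ) : List Bool := List.ofFn (fun i : Fin n => y i)

open Metric

def backwardDiff (u : ℕ → ℝ) (n : ℕ) : ℝ := u n - if n = 0 then 0 else u (n - 1)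

lemma backwardDiff_nonneg {u : ℕ → ℝ} (hu : Monotone u) (h0 : 0 ≤ u 0) (n : ℕ) :
    0 ≤ backwardDiff u n := by
  rcases n with _ | n
  · simpa [backwardDiff] using h0
  · simpa [backwardDiff] using hu n.le_succ

lemma hasSum_backwardDiff {u : ℕ → ℝ} (hu : Monotone u) (hbdd : BddAbove (range u)) :
    HasSum (backwardDiff u) (⨆ n, u n) := by
  rw [← hasSum_nat_add_iff' 1]
  have htail : (fun n => backwardDiff u (n + 1)) = fun n => u (n + 1) - u n := by
    simp [backwardDiff]
  rw [htail, hasSum_iff_tendsto_nat_of_nonneg fun n => sub_nonneg.2 (hu n.le_succ)]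
  simp only [Finset.sum_range_sub (fun n => u n), Finset.sum_range_one, backwardDiff]
  simpa using (tendsto_atTop_ciSup hu hbdd).sub_const (u 0)

section InfimaOverShrinkingSets

variable {α : Type*} {f : α → ℝ}

lemma sInf_image_le_of_bddBelow (hf : BddBelow (range f)) {K : Set α} {x : α} (hx : x ∈ K) :
    sInf (f '' K) ≤ f x :=
  csInf_le (hf.mono (image_subset_range f K)) (mem_image_of_mem f hx)

lemma monotone_sInf_image (hf : BddBelow (range f)) {K : ℕ → Set α} (hK : Antitone K)
    (hne : ∀ n, (K n).Nonempty) : Monotone fun n => sInf (f '' K n) := fun _ _ hmn =>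
  csInf_le_csInf (hf.mono (image_subset_range f _)) ((hne _).image f) (image_mono (hK hmn))

lemma LowerSemicontinuousWithinAt.iSup_sInf_image_eq [PseudoMetricSpace α] {S : Set α} {x : α}
    (hlsc : LowerSemicontinuousWithinAt f S x) (hf : BddBelow (range f)) {K : ℕ → Set α}
    (hKS : ∀ n, K n ⊆ S) (hx : ∀ n, x ∈ K n) (hshrink : ∀ ε > 0, ∃ n, K n ⊆ ball x ε) :
    ⨆ n, sInf (f '' K n) = f x := by
  have hle : ∀ n, sInf (f '' K n) ≤ f x := fun n => sInf_image_le_of_bddBelow hf (hx n)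
  refine le_antisymm (ciSup_le hle) (le_of_forall_lt_imp_le_of_dense fun c hc => ?_)
  obtain ⟨ε, hε, hball⟩ := Metric.mem_nhdsWithin_iff.1 (hlsc c hc)
  obtain ⟨n, hn⟩ := hshrink ε hε
  calc c ≤ sInf (f '' K n) := by
        refine le_csInf (Set.Nonempty.image f ⟨x, hx n⟩) ?_
        rintro _ ⟨w, hw, rfl⟩
        exact (hball ⟨hn hw, hKS n hw⟩).le
    _ ≤ ⨆ n, sInf (f '' K n) := le_ciSup ⟨f x, forall_mem_range.2 hle⟩ n

end InfimaOverShrinkingSets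

lemma Ico_subset_ball_of_mem {b l x ε : ℝ} (hx : x ∈ Ico b (b + l)) (hl : l < ε) :
    Ico b (b + l) ⊆ ball x ε := fun w hw =>
  (Real.dist_le_of_mem_Icc (Ico_subset_Icc_self hw) (Ico_subset_Icc_self hx)).trans_lt
    (by linarith)

lemma pre_succ (y : ℕ → Bool) (n : ℕ) : pre y (n + 1) = pre y n ++ [y n] := by
  rw [pre, List.ofFn_succ', List.concat_eq_append]
  rfl

def cell (a ℓ : List Bool → ℝ) (t : List Bool) : Set ℝ := Ico (a t) (a t + ℓ t)

/-- `a t` and `ℓ t` are the left endpoint and the length of the cell `I_t = cell a ℓ t`, which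
splits into `I_{t ++ [false]}` on the left and `I_{t ++ [true]}` on the right. -/
structure IsNestedBinaryPartition (a ℓ : List Bool → ℝ) : Prop where
  left_nil : a [] = 0
  length_nil : ℓ [] = 1
  length_pos : ∀ t, 0 < ℓ t
  left_append_false : ∀ t, a (t ++ [false]) = a t
  left_append_true : ∀ t, a (t ++ [true]) = a t + ℓ (t ++ [false])
  length_split : ∀ t, ℓ t = ℓ (t ++ [false]) + ℓ (t ++ [true])

namespace IsNestedBinaryPartition

variable {a ℓ : List Bool → ℝ} (hI : IsNestedBinaryPartition a ℓ)
include hI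

lemma cell_nonempty (t : List Bool) : (cell a ℓ t).Nonempty :=
  nonempty_Ico.2 (lt_add_of_pos_right _ (hI.length_pos t))

lemma cell_append_subset (t : List Bool) (b : Bool) : cell a ℓ (t ++ [b]) ⊆ cell a ℓ t := by
  have hsplit := hI.length_split t
  cases b
  · have := hI.length_pos (t ++ [true])
    exact Ico_subset_Ico (hI.left_append_false t).ge (by rw [hI.left_append_false]; linarith)
  · have := hI.length_pos (t ++ [false])
    exact Ico_subset_Ico (by rw [hI.left_append_true]; linarith)
      (by rw [hI.left_append_true]; linarith)

lemma antitone_cell_pre (y : ℕ → Bool) : Antitone fun n => cell a ℓ (pre y n) :=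
  antitone_nat_of_succ_le fun n => by
    simpa only [pre_succ] using hI.cell_append_subset (pre y n) (y n)

lemma cell_pre_subset_Ico (y : ℕ → Bool) (n : ℕ) : cell a ℓ (pre y n) ⊆ Ico 0 1 := by
  simpa [cell, pre, hI.left_nil, hI.length_nil] using hI.antitone_cell_pre y n.zero_le

variable {f : ℝ → ℝ} (hf : BddBelow (range f)) {x : ℝ} {y : ℕ → Bool}
  (hx : ∀ n, x ∈ cell a ℓ (pre y n))
include hf

lemma monotone_sInf_image_cell (y : ℕ → Bool) : Monotone fun n => sInf (f '' cell a ℓ (pre y n)) :=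
  monotone_sInf_image hf (hI.antitone_cell_pre y) fun _ => hI.cell_nonempty _

include hx

lemma hasSum_backwardDiff_sInf_image_cell :
    HasSum (backwardDiff fun n => sInf (f '' cell a ℓ (pre y n)))
      (⨆ n, sInf (f '' cell a ℓ (pre y n))) :=
  hasSum_backwardDiff (hI.monotone_sInf_image_cell hf y)
    ⟨f x, forall_mem_range.2 fun n => sInf_image_le_of_bddBelow hf (hx n)⟩

lemma iSup_sInf_image_cell_eq (hlen : Tendsto (fun n => ℓ (pre y n)) atTop (nhds 0))
    (hlsc : LowerSemicontinuousWithinAt f (Ico 0 1) x) :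
    ⨆ n, sInf (f '' cell a ℓ (pre y n)) = f x :=
  hlsc.iSup_sInf_image_eq hf (hI.cell_pre_subset_Ico y) hx fun _ hε =>
    ((hlen.eventually (gt_mem_nhds hε)).exists.imp fun n hn => Ico_subset_ball_of_mem (hx n) hn)

end IsNestedBinaryPartition

theorem stmt_4_general
    (a ℓ : List Bool → ℝ)
    (ha0 : a [] = 0) (hl0 : ℓ [] = 1)
    (hpos : ∀ s, 0 < ℓ s)
    (haf : ∀ s, a (s ++ [false]) = a s)
    (hat : ∀ s, a (s ++ [true]) = a s + ℓ (s ++ [false]))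
    (hll : ∀ s, ℓ s = ℓ (s ++ [false]) + ℓ (s ++ [true]))
    (hlen : ∀ y : ℕ → Bool, Tendsto (fun n => ℓ (pre y n)) atTop (nhds 0))
    (f : ℝ → ℝ) (hf0 : ∀ x, 0 ≤ f x)
    (hf1 : ∫ x in Set.Ico (0 : ℝ) 1, f x = 1)
    -- the term `c_{x_{1:n}}` along a digit sequence `y`, with `c_∅` for `n = 0`
    (term : (ℕ → Bool) → ℕ → ℝ)
    (hterm : ∀ y n, term y n =
      sInf (f '' Set.Ico (a (pre y n)) (a (pre y n) + ℓ (pre y n))) -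
        (if n = 0 then 0 else
          sInf (f '' Set.Ico (a (pre y (n - 1))) (a (pre y (n - 1)) + ℓ (pre y (n - 1)))))) :
    (∀ x ∈ Set.Ico (0 : ℝ) 1, ∀ y : ℕ → Bool,
      (∀ n, x ∈ Set.Ico (a (pre y n)) (a (pre y n) + ℓ (pre y n))) →
      HasSum (term y)
          (⨆ n, sInf (f '' Set.Ico (a (pre y n)) (a (pre y n) + ℓ (pre y n)))) ∧
      (LowerSemicontinuousWithinAt f (Set.Ico (0 : ℝ) 1) x → HasSum (term y) (f x))) ∧
    (∀ dig : ℝ → ℕ → Bool,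
      (∀ x ∈ Set.Ico (0 : ℝ) 1, ∀ n,
        x ∈ Set.Ico (a (pre (dig x) n)) (a (pre (dig x) n) + ℓ (pre (dig x) n))) →
      (∀ᵐ x ∂(volume.restrict (Set.Ico (0 : ℝ) 1)),
        LowerSemicontinuousWithinAt f (Set.Ico (0 : ℝ) 1) x) →
      ∫⁻ x in Set.Ico (0 : ℝ) 1, ∑' n, ENNReal.ofReal (term (dig x) n) = 1) := by
  have hI : IsNestedBinaryPartition a ℓ := ⟨ha0, hl0, hpos, haf, hat, hll⟩
  have hbdd : BddBelow (range f) := ⟨0, forall_mem_range.2 hf0⟩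
  have hterm_eq : ∀ y, term y = backwardDiff fun n => sInf (f '' cell a ℓ (pre y n)) :=
    fun y => funext (hterm y)
  have hsum : ∀ x ∈ Ico (0 : ℝ) 1, ∀ y : ℕ → Bool, (∀ n, x ∈ cell a ℓ (pre y n)) →
      HasSum (term y) (⨆ n, sInf (f '' cell a ℓ (pre y n))) ∧
      (LowerSemicontinuousWithinAt f (Ico 0 1) x → HasSum (term y) (f x)) := by
    intro x _ y hx
    rw [hterm_eq]
    refine ⟨hI.hasSum_backwardDiff_sInf_image_cell hbdd hx, fun hlsc => ?_⟩
    rw [← hI.iSup_sInf_image_cell_eq hbdd hx (hlen y) hlsc]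
    exact hI.hasSum_backwardDiff_sInf_image_cell hbdd hx
  refine ⟨hsum, fun dig hdig hlsc => ?_⟩
  have hae : ∀ᵐ x ∂(volume.restrict (Ico (0 : ℝ) 1)),
      ∑' n, ENNReal.ofReal (term (dig x) n) = ENNReal.ofReal (f x) := by
    filter_upwards [hlsc, ae_restrict_mem measurableSet_Ico] with x hx hmem
    have hfx := (hsum x hmem (dig x) (hdig x hmem)).2 hx
    have hnn : ∀ n, 0 ≤ term (dig x) n := by
      rw [hterm_eq]
      exact backwardDiff_nonneg (hI.monotone_sInf_image_cell hbdd _)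
        (Real.sInf_nonneg (forall_mem_image.2 fun w _ => hf0 w))
    rw [← ENNReal.ofReal_tsum_of_nonneg hnn hfx.summable, hfx.tsum_eq]
  have hint : IntegrableOn f (Ico (0 : ℝ) 1) :=
    Integrable.of_integral_ne_zero (by rw [hf1]; exact one_ne_zero)
  rw [lintegral_congr_ae hae, ← ofReal_integral_eq_lintegral_ofReal hint (.of_forall hf0), hf1,
    ENNReal.ofReal_one]

/-- For a probability density `f` on `[0,1)` and a nested binary partition `I`
with lengths tending to `0` along every digit sequence, set
`c_{x_{1:n}} = inf_{I_{x_{1:n}}} f − inf_{I_{x_{1:n-1}}} f` (with `c_∅ = inf_{[0,1)} f`).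
Then for every `x` with digit sequence `(x_1, x_2, …)`, the telescoping identity
`Σ_{n} c_{x_{1:n}} = lim_n inf_{I_{x_{1:n}}} f  (= ⨆_n inf_{I_{x_{1:n}}} f)` holds; if `f` is
lower semicontinuous at `x` (within `[0,1)`) this sum equals `f x`; and if `f` is lower
semicontinuous almost everywhere, then `(x,n) ↦ c_{x_{1:n}}` is a probability density with
respect to Lebesgue × counting measure, i.e. its total (Tonelli) integral is `1`. -/
theorem stmt_4
    (a ℓ : List Bool → ℝ)
    (ha0 : a [] = 0) (hl0 : ℓ [] = 1)
    (hpos : ∀ s, 0 < ℓ s)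
    (haf : ∀ s, a (s ++ [false]) = a s)
    (hat : ∀ s, a (s ++ [true]) = a s + ℓ (s ++ [false]))
    (hll : ∀ s, ℓ s = ℓ (s ++ [false]) + ℓ (s ++ [true]))
    (hlen : ∀ y : ℕ → Bool, Tendsto (fun n => ℓ (pre y n)) atTop (nhds 0))
    (f : ℝ → ℝ) (hf : Measurable f) (hf0 : ∀ x, 0 ≤ f x)
    (hf1 : ∫ x in Set.Ico (0 : ℝ) 1, f x = 1)
    -- the term `c_{x_{1:n}}` along a digit sequence `y`, with `c_∅` for `n = 0`
    (term : (ℕ → Bool) → ℕ → ℝ)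
    (hterm : ∀ y n, term y n =
      sInf (f '' Set.Ico (a (pre y n)) (a (pre y n) + ℓ (pre y n))) -
        (if n = 0 then 0 else
          sInf (f '' Set.Ico (a (pre y (n - 1))) (a (pre y (n - 1)) + ℓ (pre y (n - 1)))))) :
    (∀ x ∈ Set.Ico (0 : ℝ) 1, ∀ y : ℕ → Bool,
      (∀ n, x ∈ Set.Ico (a (pre y n)) (a (pre y n) + ℓ (pre y n))) →
      HasSum (term y)
          (⨆ n, sInf (f '' Set.Ico (a (pre y n)) (a (pre y n) + ℓ (pre y n)))) ∧
      (LowerSemicontinuousWithinAt f (Set.Ico (0 : ℝ) 1) x → HasSum (term y) (f x))) ∧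
    (∀ dig : ℝ → ℕ → Bool,
      (∀ x ∈ Set.Ico (0 : ℝ) 1, ∀ n,
        x ∈ Set.Ico (a (pre (dig x) n)) (a (pre (dig x) n) + ℓ (pre (dig x) n))) →
      (∀ᵐ x ∂(volume.restrict (Set.Ico (0 : ℝ) 1)),
        LowerSemicontinuousWithinAt f (Set.Ico (0 : ℝ) 1) x) →
      ∫⁻ x in Set.Ico (0 : ℝ) 1, ∑' n, ENNReal.ofReal (term (dig x) n) = 1) :=
  stmt_4_general a ℓ ha0 hl0 hpos haf hat hll hlen f hf0 hf1 term hterm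
end

section
/- If Z > 0 is a random variable such that the fractional part of log_q(Z) is uniformly distributed on [0,1), then the joint distribution of the first n significant base-q digits of Z follows the extended Newcomb–Benford law: for every n ≥ 1 and every x_{1:n} ∈ {0,...,q-1}^n with x_1 ≠ 0, P(first n significant digits = x_{1:n}) = log_q(1 + (Σ_{i=1}^n x_i q^{n-i})^{-1}). -/
/-!
Taking `log_q` turns the digit event `{X ∈ [S, S + q⁻ⁿ)}` into `{fract (log_q Z) ∈ [1 + log_q S,
1 + log_q (S + q⁻ⁿ))}`, an interval inside `[0, 1)` because `q⁻¹ ≤ S` (the leading digit is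
nonzero) and `S + q⁻ⁿ ≤ 1`. Uniformity makes its probability its length
`log_q ((S + q⁻ⁿ) / S) = log_q (1 + (qⁿ S)⁻¹)`, and `qⁿ S` is the integer with digits `x_{1:n}`.
-/

open MeasureTheory Set

/-- The number `0.x₁x₂…xₙ` written in base `q`. -/
noncomputable def digitFrac {q n : ℕ} (x : Fin n → Fin q) : ℝ :=
  ∑ i : Fin n, (x i : ℝ) * (q : ℝ) ^ (-(i : ℤ) - 1)

lemma sum_range_sub_one_mul_zpow {r : ℝ} (hr : r ≠ 0) (m : ℕ) :
    ∑ i ∈ Finset.range m, (r - 1) * r ^ (-(i : ℤ) - 1) = 1 - r ^ (-(m : ℤ)) := by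
  induction m with
  | zero => simp
  | succ m ih =>
    have hpow : r ^ (-(m : ℤ)) = r ^ (-(m : ℤ) - 1) * r := by
      rw [← zpow_add_one₀ hr]; ring_nf
    rw [Finset.sum_range_succ, ih, hpow, Nat.cast_succ, neg_add']
    ring

section digitFrac

variable {q n : ℕ} (x : Fin n → Fin q)

lemma digitFrac_add_zpow_le_one (hq : 0 < q) : digitFrac x + (q : ℝ) ^ (-(n : ℤ)) ≤ 1 := by
  have hdigits : digitFrac x ≤ ∑ i : Fin n, ((q : ℝ) - 1) * (q : ℝ) ^ (-(i : ℤ) - 1) := by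
    refine Finset.sum_le_sum fun i _ => mul_le_mul_of_nonneg_right ?_ (by positivity)
    have : ((x i : ℕ) : ℝ) + 1 ≤ q := by exact_mod_cast (x i).isLt
    linarith
  rw [Fin.sum_univ_eq_sum_range (fun i => ((q : ℝ) - 1) * (q : ℝ) ^ (-(i : ℤ) - 1)),
    sum_range_sub_one_mul_zpow (by positivity)] at hdigits
  linarith

lemma inv_le_digitFrac (hn : 0 < n) (hx : (x ⟨0, hn⟩ : ℕ) ≠ 0) : (q : ℝ)⁻¹ ≤ digitFrac x := by
  have hlead : (1 : ℝ) ≤ (x ⟨0, hn⟩ : ℕ) := by exact_mod_cast Nat.one_le_iff_ne_zero.mpr hx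
  calc (q : ℝ)⁻¹ ≤ (x ⟨0, hn⟩ : ℝ) * (q : ℝ) ^ (-((0 : ℕ) : ℤ) - 1) := by
        simpa using mul_le_mul_of_nonneg_right hlead (by positivity : (0 : ℝ) ≤ (q : ℝ)⁻¹)
    _ ≤ digitFrac x :=
        Finset.single_le_sum (f := fun i : Fin n => (x i : ℝ) * (q : ℝ) ^ (-(i : ℤ) - 1))
          (fun _ _ => by positivity) (Finset.mem_univ _)

lemma sum_digits_mul_zpow_eq (hq : 0 < q) :
    ∑ i : Fin n, (x i : ℝ) * (q : ℝ) ^ ((n : ℤ) - (i : ℤ) - 1) = (q : ℝ) ^ (n : ℤ) * digitFrac x := by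
  rw [digitFrac, Finset.mul_sum]
  refine Finset.sum_congr rfl fun i _ => ?_
  rw [show (n : ℤ) - i - 1 = n + (-(i : ℤ) - 1) by ring, zpow_add₀ (by positivity)]
  ring

end digitFrac

lemma Real.rpow_sub_one_mem_Ico_iff {b s t u : ℝ} (hb : 1 < b) (hs : 0 < s) (ht : 0 < t) :
    b ^ (u - 1) ∈ Ico s t ↔ u ∈ Ico (1 + logb b s) (1 + logb b t) := by
  rw [mem_Ico, mem_Ico, ← logb_le_iff_le_rpow hb hs, ← lt_logb_iff_rpow_lt hb ht]
  constructor <;> rintro ⟨_, _⟩ <;> constructor <;> linarith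

lemma Real.Ico_one_add_logb_subset_Ico {b s t : ℝ} (hb : 1 < b) (hs : b⁻¹ ≤ s) (ht₀ : 0 < t)
    (ht : t ≤ 1) :
    Ico (1 + logb b s) (1 + logb b t) ⊆ Ico 0 1 := by
  have hb0 : 0 < b⁻¹ := inv_pos.mpr (by linarith)
  refine Ico_subset_Ico ?_ ?_
  · have := logb_le_logb_of_le hb hb0 hs
    rw [logb_inv, logb_self_eq_one hb] at this
    linarith
  · have := logb_le_logb_of_le hb ht₀ ht
    rw [logb_one] at this
    linarith

lemma measure_preimage_eq_volume_of_map_eq_restrict_Ico {Ω : Type*} [MeasurableSpace Ω]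
    {μ : Measure Ω} {U : Ω → ℝ} (hU : μ.map U = volume.restrict (Ico 0 1)) {s : Set ℝ}
    (hs : MeasurableSet s) (hs01 : s ⊆ Ico 0 1) : μ (U ⁻¹' s) = volume s := by
  -- A map that is not a.e.-measurable pushes `μ` forward to `0`, not to the uniform law.
  have hUmeas : AEMeasurable U μ := AEMeasurable.of_map_ne_zero <| by
    simp [hU, Measure.restrict_eq_zero]
  rw [← Measure.map_apply_of_aemeasurable hUmeas hs, hU, Measure.restrict_apply hs,
    inter_eq_left.mpr hs01]

theorem stmt_6_general {Ω : Type*} [MeasurableSpace Ω] (μ : Measure Ω)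
    (q : ℕ) (hq : 2 ≤ q) (Z : Ω → ℝ)
    (hunif : μ.map (fun ω => Int.fract (Real.logb q (Z ω)))
      = volume.restrict (Set.Ico (0 : ℝ) 1))
    (n : ℕ) (hn : 1 ≤ n) (x : Fin n → Fin q) (hx : (x ⟨0, hn⟩ : ℕ) ≠ 0) :
    μ {ω | (q : ℝ) ^ (Int.fract (Real.logb q (Z ω)) - 1) ∈
        Set.Ico (∑ i : Fin n, (x i : ℝ) * (q : ℝ) ^ (-(i : ℤ) - 1))
          ((∑ i : Fin n, (x i : ℝ) * (q : ℝ) ^ (-(i : ℤ) - 1)) + (q : ℝ) ^ (-(n : ℤ)))}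
      = ENNReal.ofReal
          (Real.logb q (1 + ((∑ i : Fin n, (x i : ℝ) * (q : ℝ) ^ ((n : ℤ) - (i : ℤ) - 1)))⁻¹)) := by
  change μ {ω | _ ∈ Ico (digitFrac x) (digitFrac x + _)} = _
  have hq0 : 0 < q := by omega
  have hq1 : (1 : ℝ) < q := by exact_mod_cast hq
  set S := digitFrac x
  set ε := (q : ℝ) ^ (-(n : ℤ))
  have hSlow : (q : ℝ)⁻¹ ≤ S := inv_le_digitFrac x hn hx
  have hSpos : 0 < S := lt_of_lt_of_le (by positivity) hSlow
  have hSup : S + ε ≤ 1 := digitFrac_add_zpow_le_one x hq0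
  have hscale : (q : ℝ) ^ (n : ℤ) * ε = 1 := by
    simp only [ε, zpow_neg]; exact mul_inv_cancel₀ (by positivity)
  have hevent : {ω | (q : ℝ) ^ (Int.fract (Real.logb q (Z ω)) - 1) ∈ Ico S (S + ε)} =
      (fun ω => Int.fract (Real.logb q (Z ω))) ⁻¹'
        Ico (1 + Real.logb q S) (1 + Real.logb q (S + ε)) :=
    Set.ext fun _ => Real.rpow_sub_one_mem_Ico_iff hq1 hSpos (by positivity)
  rw [hevent, measure_preimage_eq_volume_of_map_eq_restrict_Ico hunif measurableSet_Ico
    (Real.Ico_one_add_logb_subset_Ico hq1 hSlow (by positivity) hSup), Real.volume_Ico,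
    sum_digits_mul_zpow_eq x hq0,
    show 1 + ((q : ℝ) ^ (n : ℤ) * S)⁻¹ = (S + ε) / S by field_simp; linear_combination -hscale,
    Real.logb_div (by positivity) hSpos.ne']
  ring_nf

/-- If `Z > 0` is a random variable such that the fractional part of
`log_q Z` is uniformly distributed on `[0,1)`, then the first `n` significant base-`q`
digits of `Z` follow the extended Newcomb–Benford law: for every `n ≥ 1` and every digit
string `x_{1:n} ∈ {0,…,q-1}^n` with `x_1 ≠ 0`,
`P(first n significant digits = x_{1:n}) = log_q (1 + (Σ_{i=1}^n x_i q^{n-i})⁻¹)`.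
Here the mantissa-over-`q` is `X = q^{fract(log_q Z) − 1} ∈ [1/q, 1)` and the event
`{first n significant digits = x_{1:n}}` is `{X ∈ [Σ x_i q^{-i}, Σ x_i q^{-i} + q^{-n})}`. -/
theorem stmt_6 {Ω : Type*} [MeasurableSpace Ω] (μ : Measure Ω) [IsProbabilityMeasure μ]
    (q : ℕ) (hq : 2 ≤ q) (Z : Ω → ℝ) (hZmeas : Measurable Z) (hZpos : ∀ ω, 0 < Z ω)
    (hunif : μ.map (fun ω => Int.fract (Real.logb q (Z ω)))
      = volume.restrict (Set.Ico (0 : ℝ) 1))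
    (n : ℕ) (hn : 1 ≤ n) (x : Fin n → Fin q) (hx : (x ⟨0, hn⟩ : ℕ) ≠ 0) :
    μ {ω | (q : ℝ) ^ (Int.fract (Real.logb q (Z ω)) - 1) ∈
        Set.Ico (∑ i : Fin n, (x i : ℝ) * (q : ℝ) ^ (-(i : ℤ) - 1))
          ((∑ i : Fin n, (x i : ℝ) * (q : ℝ) ^ (-(i : ℤ) - 1)) + (q : ℝ) ^ (-(n : ℤ)))}
      = ENNReal.ofReal
          (Real.logb q (1 + ((∑ i : Fin n, (x i : ℝ) * (q : ℝ) ^ ((n : ℤ) - (i : ℤ) - 1)))⁻¹)) :=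
  stmt_6_general μ q hq Z hunif n hn x hx
end

section
/- Let P be the random probability measure induced by a generalized finite Pólya tree of type 1: conditionally on N = n, the density on [0,1) is f(x | Y^{(n)}) = (∏_{j=1}^n Y_{x_{1:j-1},0}^{1-x_j} Y_{x_{1:j-1},1}^{x_j}) / ℓ_{x_{1:n}} where x has digits x_1 x_2 .... Then for every d ≥ 1 and every binary string x_{1:d}, E[P(I_{x_{1:d}})] = Σ_{n=0}^{d-1} p_n · (ℓ_{x_{1:d}}/ℓ_{x_{1:n}}) · ∏_{j=1}^n α_{x_{1:j}}/(α_{x_{1:j-1},0} + α_{x_{1:j-1},1}) + P(N ≥ d) · ∏_{j=1}^d α_{x_{1:j}}/(α_{x_{1:j-1},0} + α_{x_{1:j-1},1}). -/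
open MeasureTheory ProbabilityTheory Finset

/-!
Conditioning on `min(N, d)`, which is independent of `Y`, reduces the mean of `P(I_x)` to
`∑ₙ P(min(N, d) = n) · E[∏_{j<n} Y_{x_{1:j+1}}] · ℓ_x / ℓ_{x_{1:n}}`. Along the path of `x` the
factors `Y_{x_{1:j+1}}` are the independent variables `Y_{x_{1:j},0}`, some of them flipped to
`1 - Y_{x_{1:j},0}`, so the expected product is the product of the Beta means.
-/

namespace ProbabilityTheory

theorem IndepFun.integral_comp_eq_sum {Ω ι β : Type*} [MeasurableSpace Ω] {μ : Measure Ω}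
    [MeasurableSpace ι] [MeasurableSingletonClass ι] [MeasurableSpace β]
    {M : Ω → ι} {W : Ω → β} (hM : Measurable M) (hMW : IndepFun M W μ)
    (s : Finset ι) (hs : ∀ ω, M ω ∈ s) (h : ι → β → ℝ) (hh : ∀ i, Measurable (h i))
    (hint : ∀ i ∈ s, Integrable (fun ω ↦ h i (W ω)) μ) :
    ∫ ω, h (M ω) (W ω) ∂μ = ∑ i ∈ s, μ.real {ω | M ω = i} * ∫ ω, h i (W ω) ∂μ := by
  have hset : ∀ i, MeasurableSet {ω | M ω = i} := fun i ↦ hM (measurableSet_singleton i)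
  have hsplit : ∀ ω, h (M ω) (W ω)
      = ∑ i ∈ s, ({ω | M ω = i}.indicator 1 ω : ℝ) * h i (W ω) := by
    intro ω
    rw [sum_eq_single_of_mem (M ω) (hs ω)]
    · simp
    · intro i _ hi
      simp [Set.indicator_of_notMem (show ω ∉ {ω | M ω = i} from Ne.symm hi)]
  simp_rw [hsplit]
  rw [integral_finsetSum]
  · refine sum_congr rfl fun i hi ↦ ?_
    have hind : IndepFun ({ω | M ω = i}.indicator (1 : Ω → ℝ)) (fun ω ↦ h i (W ω)) μ :=
      hMW.comp (measurable_const.indicator (measurableSet_singleton i)) (hh i)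
    rw [hind.integral_fun_mul_eq_mul_integral
      ((measurable_const.indicator (hset i)).aestronglyMeasurable)
      (hint i hi).aestronglyMeasurable, integral_indicator_one (hset i)]
  · intro i hi
    refine ((hint i hi).indicator (hset i)).congr (.of_forall fun ω ↦ ?_)
    by_cases hω : M ω = i <;> simp [hω]

end ProbabilityTheory

theorem integrable_finset_prod_of_mem_Icc {Ω ι : Type*} [MeasurableSpace Ω] {μ : Measure Ω}
    [IsFiniteMeasure μ] {f : ι → Ω → ℝ} (hf : ∀ i, Measurable (f i))
    (hf01 : ∀ i ω, f i ω ∈ Set.Icc (0 : ℝ) 1) (s : Finset ι) :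
    Integrable (fun ω ↦ ∏ i ∈ s, f i ω) μ := by
  refine .of_bound (by fun_prop) 1 (.of_forall fun ω ↦ ?_)
  rw [Real.norm_of_nonneg (prod_nonneg fun i _ ↦ (hf01 i ω).1)]
  exact prod_le_one (fun i _ ↦ (hf01 i ω).1) fun i _ ↦ (hf01 i ω).2

section PolyaTreePath

variable {Ω : Type*} [MeasurableSpace Ω] {μ : Measure Ω} {Y : List Bool → Ω → ℝ}

theorem iIndepFun_append_singleton (hYsum : ∀ s ω, Y (s ++ [true]) ω = 1 - Y (s ++ [false]) ω)
    (hYindep : iIndepFun (fun s ↦ Y (s ++ [false])) μ) (b : List Bool → Bool) :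
    iIndepFun (fun s ↦ Y (s ++ [b s])) μ := by
  have hflip := hYindep.comp (fun s t ↦ if b s then 1 - t else t)
    fun s ↦ by split_ifs <;> fun_prop
  convert hflip using 2 with s
  ext ω
  cases b s <;> simp [hYsum]

theorem iIndepFun_take_succ (hYsum : ∀ s ω, Y (s ++ [true]) ω = 1 - Y (s ++ [false]) ω)
    (hYindep : iIndepFun (fun s ↦ Y (s ++ [false])) μ) {x : List Bool} {n : ℕ}
    (hn : n ≤ x.length) :
    iIndepFun (fun j : Fin n ↦ Y (x.take (j + 1))) μ := by
  have hinj : Function.Injective fun j : Fin n ↦ x.take j := by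
    intro i j hij
    have := congrArg List.length hij
    simp only [List.length_take] at this
    omega
  convert (iIndepFun_append_singleton hYsum hYindep
    fun s ↦ x.getD s.length false).precomp hinj using 2 with j
  have hj : (j : ℕ) < x.length := by omega
  rw [List.take_succ_eq_append_getElem hj, List.length_take_of_le hj.le,
    List.getD_eq_getElem _ _ hj]

theorem integral_prod_take_succ {α : List Bool → ℝ} (hYmeas : ∀ s, Measurable (Y s))
    (hYsum : ∀ s ω, Y (s ++ [true]) ω = 1 - Y (s ++ [false]) ω)
    (hYmean : ∀ s b, ∫ ω, Y (s ++ [b]) ω ∂μ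
      = α (s ++ [b]) / (α (s ++ [false]) + α (s ++ [true])))
    (hYindep : iIndepFun (fun s ↦ Y (s ++ [false])) μ) {x : List Bool} {n : ℕ}
    (hn : n ≤ x.length) :
    ∫ ω, ∏ j ∈ range n, Y (x.take (j + 1)) ω ∂μ
      = ∏ j ∈ range n, α (x.take (j + 1)) / (α (x.take j ++ [false]) + α (x.take j ++ [true])) := by
  have hprod : ∫ ω, ∏ j ∈ range n, Y (x.take (j + 1)) ω ∂μ
      = ∏ j ∈ range n, ∫ ω, Y (x.take (j + 1)) ω ∂μ := by
    rw [← Fin.prod_univ_eq_prod_range (fun j ↦ ∫ ω, Y (x.take (j + 1)) ω ∂μ),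
      ← (iIndepFun_take_succ hYsum hYindep hn).integral_fun_prod_eq_prod_integral
        fun j ↦ (hYmeas _).aestronglyMeasurable]
    congr 1 with ω
    exact (Fin.prod_univ_eq_prod_range (fun j ↦ Y (x.take (j + 1)) ω) n).symm
  rw [hprod]
  refine prod_congr rfl fun j hj ↦ ?_
  rw [List.take_succ_eq_append_getElem (by rw [mem_range] at hj; omega), hYmean]

end PolyaTreePath

theorem stmt_7_general {Ω : Type*} [MeasurableSpace Ω] (μ : Measure Ω) [IsProbabilityMeasure μ]
    (ℓ : List Bool → ℝ) (hlpos : ∀ s, 0 < ℓ s)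
    (α : List Bool → ℝ)
    (Y : List Bool → Ω → ℝ) (hYmeas : ∀ s, Measurable (Y s))
    (hYrange : ∀ s ω, Y s ω ∈ Set.Icc (0 : ℝ) 1)
    (hYsum : ∀ s ω, Y (s ++ [true]) ω = 1 - Y (s ++ [false]) ω)
    -- each `Y_{s,0} ~ Beta(α_{s,0}, α_{s,1})`, so it has the Beta mean:
    (hYmean : ∀ s b, ∫ ω, Y (s ++ [b]) ω ∂μ
      = α (s ++ [b]) / (α (s ++ [false]) + α (s ++ [true])))
    (hYindep : iIndepFun
      (fun s => Y (s ++ [false])) μ)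
    (N : Ω → ℕ) (hN : Measurable N)
    (hNY : IndepFun N (fun ω s => Y s ω) μ)
    (p : ℕ → ℝ) (hp : ∀ n, p n = (μ {ω | N ω = n}).toReal)
    (x : List Bool) (d : ℕ) (hx : x.length = d) :
    ∫ ω, ((∏ j ∈ Finset.range (min (N ω) d), Y (x.take (j + 1)) ω) *
        (ℓ x / ℓ (x.take (min (N ω) d)))) ∂μ
      = (∑ n ∈ Finset.range d, p n * (ℓ x / ℓ (x.take n)) *
            ∏ j ∈ Finset.range n,
              α (x.take (j + 1)) / (α (x.take j ++ [false]) + α (x.take j ++ [true])))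
        + (μ {ω | d ≤ N ω}).toReal *
            ∏ j ∈ Finset.range d,
              α (x.take (j + 1)) / (α (x.take j ++ [false]) + α (x.take j ++ [true])) := by
  have hmin : Measurable (min · d : ℕ → ℕ) := measurable_from_top
  have hint : ∀ n, Integrable (fun ω ↦ ∏ j ∈ range n, Y (x.take (j + 1)) ω) μ := fun n ↦
    integrable_finset_prod_of_mem_Icc (fun j ↦ hYmeas _) (fun j ↦ hYrange _) (range n)
  have hmean := fun n (hn : n ≤ d) ↦ integral_prod_take_succ hYmeas hYsum hYmean hYindep (hx ▸ hn)
  rw [IndepFun.integral_comp_eq_sum (M := fun ω ↦ min (N ω) d) (W := fun ω s ↦ Y s ω)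
    (hmin.comp hN) (hNY.comp hmin measurable_id) (range (d + 1)) (fun ω ↦ mem_range.2 (by omega))
    (fun n y ↦ (∏ j ∈ range n, y (x.take (j + 1))) * (ℓ x / ℓ (x.take n)))
    (fun n ↦ by fun_prop) fun n _ ↦ (hint n).mul_const _, sum_range_succ]
  congr 1
  · refine sum_congr rfl fun n hn ↦ ?_
    have hset : {ω | min (N ω) d = n} = {ω | N ω = n} := by
      rw [mem_range] at hn
      exact Set.ext fun ω ↦ by simp only [Set.mem_ofPred_eq]; omega
    rw [hset, measureReal_def, ← hp, integral_mul_const, hmean n (mem_range.1 hn).le]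
    ring
  · have hset : {ω | min (N ω) d = d} = {ω | d ≤ N ω} :=
      Set.ext fun ω ↦ by simp only [Set.mem_ofPred_eq]; omega
    rw [hset, measureReal_def, integral_mul_const, hmean d le_rfl, ← hx, List.take_length,
      div_self (hlpos x).ne', mul_one]

/-- Mean of the random probability measure `P` induced by a generalized finite
Pólya tree of type 1.  Conditionally on `(Y, N)`, the mass assigned to the level-`d`
interval `I_{x_{1:d}}` is
`P(I_{x_{1:d}}) = (∏_{j=1}^{min(N,d)} Y_{x_{1:j}}) · ℓ_{x_{1:d}} / ℓ_{x_{1:min(N,d)}}`,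
obtained by integrating the GFPT1 density `f(·|Y^{(N)})` over `I_{x_{1:d}}`.  Then
`E[P(I_{x_{1:d}})] = Σ_{n=0}^{d-1} p_n (ℓ_{x_{1:d}}/ℓ_{x_{1:n}}) ∏_{j=1}^n α_{x_{1:j}}/(α_{x_{1:j-1},0}+α_{x_{1:j-1},1})
  + P(N ≥ d) ∏_{j=1}^d α_{x_{1:j}}/(α_{x_{1:j-1},0}+α_{x_{1:j-1},1})`. -/
theorem stmt_7 {Ω : Type*} [MeasurableSpace Ω] (μ : Measure Ω) [IsProbabilityMeasure μ]
    (ℓ : List Bool → ℝ) (hl0 : ℓ [] = 1) (hlpos : ∀ s, 0 < ℓ s)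
    (hll : ∀ s, ℓ s = ℓ (s ++ [false]) + ℓ (s ++ [true]))
    (α : List Bool → ℝ) (hα : ∀ s, 0 ≤ α s)
    (hαsum : ∀ s, 0 < α (s ++ [false]) + α (s ++ [true]))
    (Y : List Bool → Ω → ℝ) (hYmeas : ∀ s, Measurable (Y s))
    (hYrange : ∀ s ω, Y s ω ∈ Set.Icc (0 : ℝ) 1)
    (hYsum : ∀ s ω, Y (s ++ [true]) ω = 1 - Y (s ++ [false]) ω)
    -- each `Y_{s,0} ~ Beta(α_{s,0}, α_{s,1})`, so it has the Beta mean: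
    (hYmean : ∀ s b, ∫ ω, Y (s ++ [b]) ω ∂μ
      = α (s ++ [b]) / (α (s ++ [false]) + α (s ++ [true])))
    (hYindep : iIndepFun
      (fun s => Y (s ++ [false])) μ)
    (N : Ω → ℕ) (hN : Measurable N)
    (hNY : IndepFun N (fun ω s => Y s ω) μ)
    (p : ℕ → ℝ) (hp : ∀ n, p n = (μ {ω | N ω = n}).toReal)
    (x : List Bool) (d : ℕ) (hd : 1 ≤ d) (hx : x.length = d) :
    ∫ ω, ((∏ j ∈ Finset.range (min (N ω) d), Y (x.take (j + 1)) ω) *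
        (ℓ x / ℓ (x.take (min (N ω) d)))) ∂μ
      = (∑ n ∈ Finset.range d, p n * (ℓ x / ℓ (x.take n)) *
            ∏ j ∈ Finset.range n,
              α (x.take (j + 1)) / (α (x.take j ++ [false]) + α (x.take j ++ [true])))
        + (μ {ω | d ≤ N ω}).toReal *
            ∏ j ∈ Finset.range d,
              α (x.take (j + 1)) / (α (x.take j ++ [false]) + α (x.take j ++ [true])) :=
  stmt_7_general μ ℓ hlpos α Y hYmeas hYrange hYsum hYmean hYindep N hN hNY p hp x d hx
end
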